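/- Let Ω ⊂ ℝⁿ be a domain, s ∈ (0,1], p ∈ (n/s,∞), and suppose Ω is regular (|B(x,r)∩Ω| ≥ c rⁿ for x ∈ closure(Ω), 0 < r < θ) and that there exist constants δ, N, C such that for all measurable u with g ∈ D^s_ball(u) ∩ L^p(Ω) and a.e. x, y ∈ Ω with |x−y| ≤ δ: |u(x)−u(y)| ≤ C|x−y|^{s−n/p}(∫_{B(x,N|x−y|)∩Ω} g^p dz)^{1/p}. Then for a.e. x, y ∈ Ω with |x−y| ≤ δ/10, one also has |u(x)−u(y)| ≤ C'|x−y|^s ( M^Ω_{2N|x−y|}(g^p)(x) + M^Ω_{2N|x−y|}(g^p)(y) )^{1/p}, where M^Ω_R(f)(x) = sup_{0<r<R} ⨍_{B(x,r)∩Ω} |f| dz (average with respect to |B(x,r)∩Ω|). -/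

import Mathlib

open MeasureTheory Metric Set ENNReal

/-- `g ∈ D^s_ball(u)` on `Ω`. -/
def MemDBall {n : ℕ} (Ω : Set (EuclideanSpace ℝ (Fin n))) (s : ℝ)
    (u g : EuclideanSpace ℝ (Fin n) → ℝ) : Prop :=
  (∀ x, 0 ≤ g x) ∧ Measurable g ∧
  ∃ E : Set (EuclideanSpace ℝ (Fin n)), volume E = 0 ∧
    ∀ x ∈ Ω \ E, ∀ y ∈ Ω \ E,
      ENNReal.ofReal (2 * dist x y) < EMetric.infEdist x Ωᶜ →
      |u x - u y| ≤ dist x y ^ s * (g x + g y)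

/-- The restricted maximal function
`M^Ω_R(f)(x) = sup_{0<r<R} ⨍_{B(x,r)∩Ω} |f|`, averages taken with respect to
`|B(x,r)∩Ω|`. -/
noncomputable def restrictedMaximal {n : ℕ} (Ω : Set (EuclideanSpace ℝ (Fin n)))
    (R : ℝ) (f : EuclideanSpace ℝ (Fin n) → ℝ) (x : EuclideanSpace ℝ (Fin n)) : ℝ :=
  sSup {a : ℝ | ∃ r : ℝ, 0 < r ∧ r < R ∧
    a = (∫ z in ball x r ∩ Ω, |f z|) / (volume (ball x r ∩ Ω)).toReal}

/-- Auxiliary: at a Lebesgue point of a nonnegative integrable function on a regular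
domain, the full family of averages over balls intersected with the domain is bounded. -/
lemma bddAbove_avgSet {n : ℕ} (Ω : Set (EuclideanSpace ℝ (Fin n))) (hΩ : IsOpen Ω)
    (c θ : ℝ) (hc : 0 < c) (hθ : 0 < θ)
    (hreg : ∀ x ∈ closure Ω, ∀ r : ℝ, 0 < r → r < θ →
      c * r ^ (n : ℝ) ≤ (volume (ball x r ∩ Ω)).toReal)
    (f : EuclideanSpace ℝ (Fin n) → ℝ) (hf0 : ∀ z, 0 ≤ f z)
    (hfi : IntegrableOn f Ω volume) (x : EuclideanSpace ℝ (Fin n)) (hx : x ∈ Ω)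
    (hT : Filter.Tendsto (fun r => ⨍ y in closedBall x r, f y ∂(volume.restrict Ω))
      (nhdsWithin 0 (Set.Ioi 0)) (nhds (f x))) :
    BddAbove {a : ℝ | ∃ r : ℝ, 0 < r ∧
      a = (∫ z in ball x r ∩ Ω, f z) / (volume (ball x r ∩ Ω)).toReal} := by
  set μ : Measure (EuclideanSpace ℝ (Fin n)) := volume.restrict Ω with hμ
  have hΩm : MeasurableSet Ω := hΩ.measurableSet
  have hfim : Integrable f μ := hfi
  have hev : ∀ᶠ r in nhdsWithin 0 (Set.Ioi 0),
      (⨍ y in closedBall x r, f y ∂μ) < f x + 1 :=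
    hT.eventually_lt_const (lt_add_one (f x))
  obtain ⟨ε, hε, hsub⟩ := mem_nhdsGT_iff_exists_Ioc_subset.1 hev
  rw [Set.mem_Ioi] at hε
  set ε' : ℝ := min ε (θ / 2) with hε'def
  have hε'0 : 0 < ε' := lt_min hε (by linarith)
  have hε'θ : ε' < θ := lt_of_le_of_lt (min_le_right _ _) (by linarith)
  set Bn : ℝ := (volume (ball (0 : EuclideanSpace ℝ (Fin n)) 1)).toReal with hBn
  have hBn0 : 0 ≤ Bn := ENNReal.toReal_nonneg
  have hxc : x ∈ closure Ω := subset_closure hx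
  have hfx1 : 0 ≤ f x + 1 := by have := hf0 x; linarith
  have hItot : 0 ≤ ∫ z in Ω, f z := setIntegral_nonneg hΩm fun z _ => hf0 z
  refine ⟨max ((∫ z in Ω, f z) / (c * ε' ^ n)) ((f x + 1) * Bn / c), ?_⟩
  rintro a ⟨r, hr, rfl⟩
  have hVfin : volume (ball x r ∩ Ω) ≠ ⊤ :=
    ((measure_mono Set.inter_subset_left).trans_lt measure_ball_lt_top).ne
  by_cases hrε : r ≤ ε'
  · -- small radii: use the Lebesgue point property
    have hrθ : r < θ := lt_of_le_of_lt hrε hε'θ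
    have hV : c * r ^ n ≤ (volume (ball x r ∩ Ω)).toReal := by
      have := hreg x hxc r hr hrθ
      rwa [Real.rpow_natCast] at this
    have hVpos : 0 < c * r ^ n := by positivity
    -- the numerator, as an integral w.r.t. μ
    have hnum1 : (∫ z in ball x r ∩ Ω, f z) = ∫ z in ball x r, f z ∂μ := by
      rw [hμ, Measure.restrict_restrict measurableSet_ball]
    have hnum2 : (∫ z in ball x r, f z ∂μ) ≤ ∫ z in closedBall x r, f z ∂μ :=
      setIntegral_mono_set hfim.integrableOn
        (Filter.Eventually.of_forall fun z => hf0 z)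
        (HasSubset.Subset.eventuallyLE ball_subset_closedBall)
    have hμball : μ (ball x r) = volume (ball x r ∩ Ω) := Measure.restrict_apply' hΩm
    have hμcb : μ (closedBall x r) = volume (closedBall x r ∩ Ω) :=
      Measure.restrict_apply' hΩm
    have hμcb_fin : μ (closedBall x r) ≠ ⊤ := by
      rw [hμcb]
      exact ((measure_mono Set.inter_subset_left).trans_lt measure_closedBall_lt_top).ne
    have hμcb_le : (μ (closedBall x r)).toReal ≤ r ^ n * Bn := by
      rw [hμcb]
      refine le_trans (ENNReal.toReal_mono measure_closedBall_lt_top.ne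
        (measure_mono Set.inter_subset_left)) ?_
      rw [Measure.addHaar_closedBall volume x hr.le, ENNReal.toReal_mul,
        ENNReal.toReal_ofReal (by positivity)]
      simp [finrank_euclideanSpace_fin, hBn]
    have hcbpos : 0 < (μ (closedBall x r)).toReal := by
      refine lt_of_lt_of_le (lt_of_lt_of_le hVpos hV) ?_
      rw [← hμball]
      exact ENNReal.toReal_mono hμcb_fin (measure_mono ball_subset_closedBall)
    have havg : (⨍ y in closedBall x r, f y ∂μ) < f x + 1 :=
      hsub ⟨hr, hrε.trans (min_le_left _ _)⟩
    have hIcb : (∫ z in closedBall x r, f z ∂μ) ≤ (μ (closedBall x r)).toReal * (f x + 1) := by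
      rw [setAverage_eq, smul_eq_mul] at havg
      have := (inv_mul_lt_iff₀ hcbpos).1 havg
      linarith
    have hnum : (∫ z in ball x r ∩ Ω, f z) ≤ (r ^ n * Bn) * (f x + 1) := by
      rw [hnum1]
      refine le_trans hnum2 (le_trans hIcb ?_)
      exact mul_le_mul_of_nonneg_right hμcb_le hfx1
    refine le_trans ?_ (le_max_right _ _)
    have h1 : (∫ z in ball x r ∩ Ω, f z) / (volume (ball x r ∩ Ω)).toReal
        ≤ ((r ^ n * Bn) * (f x + 1)) / (c * r ^ n) :=
      div_le_div₀ (by positivity) hnum hVpos hV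
    refine le_trans h1 (le_of_eq ?_)
    have hrn : (r : ℝ) ^ n ≠ 0 := by positivity
    field_simp
  · push_neg at hrε
    have hmono : (volume (ball x ε' ∩ Ω)).toReal ≤ (volume (ball x r ∩ Ω)).toReal :=
      ENNReal.toReal_mono hVfin
        (measure_mono (Set.inter_subset_inter_left _ (ball_subset_ball hrε.le)))
    have hV : c * ε' ^ n ≤ (volume (ball x r ∩ Ω)).toReal := by
      refine le_trans ?_ hmono
      have := hreg x hxc ε' hε'0 hε'θ
      rwa [Real.rpow_natCast] at this
    have hnum : (∫ z in ball x r ∩ Ω, f z) ≤ ∫ z in Ω, f z :=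
      setIntegral_mono_set hfi (Filter.Eventually.of_forall fun z => hf0 z)
        (HasSubset.Subset.eventuallyLE Set.inter_subset_right)
    refine le_trans ?_ (le_max_left _ _)
    exact div_le_div₀ hItot hnum (by positivity) hV

/-- On a regular domain, the pointwise Hölder bound in terms of local `L^p` integrals
of the gradient self-improves to a pointwise bound in terms of restricted maximal
functions of `g^p`. -/
theorem holder_implies_maximal_bound {n : ℕ} (hn : 1 ≤ n)
    (Ω : Set (EuclideanSpace ℝ (Fin n))) (hΩopen : IsOpen Ω) (hΩconn : IsConnected Ω)
    (s p : ℝ) (hs : 0 < s) (hs1 : s ≤ 1) (hp : (n : ℝ) / s < p)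
    (c θ : ℝ) (hc : 0 < c) (hθ : 0 < θ)
    (hreg : ∀ x ∈ closure Ω, ∀ r : ℝ, 0 < r → r < θ →
      c * r ^ (n : ℝ) ≤ (volume (ball x r ∩ Ω)).toReal)
    (δ N C : ℝ) (hδ : 0 < δ) (hN : 1 ≤ N) (hC : 0 < C)
    (hyp : ∀ u g : EuclideanSpace ℝ (Fin n) → ℝ,
      MemDBall Ω s u g → MemLp g (ENNReal.ofReal p) (volume.restrict Ω) →
      ∃ E : Set (EuclideanSpace ℝ (Fin n)), volume E = 0 ∧
        ∀ x ∈ Ω \ E, ∀ y ∈ Ω \ E, dist x y ≤ δ →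
          |u x - u y| ≤ C * dist x y ^ (s - n / p) *
            (∫ z in ball x (N * dist x y) ∩ Ω, g z ^ p) ^ (1 / p)) :
    ∃ C' : ℝ, 0 < C' ∧
    ∀ u g : EuclideanSpace ℝ (Fin n) → ℝ,
      MemDBall Ω s u g → MemLp g (ENNReal.ofReal p) (volume.restrict Ω) →
      ∃ E : Set (EuclideanSpace ℝ (Fin n)), volume E = 0 ∧
        ∀ x ∈ Ω \ E, ∀ y ∈ Ω \ E, dist x y ≤ δ / 10 →
          |u x - u y| ≤ C' * dist x y ^ s *
            (restrictedMaximal Ω (2 * N * dist x y) (fun z => g z ^ p) x +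
             restrictedMaximal Ω (2 * N * dist x y) (fun z => g z ^ p) y) ^ (1 / p) := by
  have hΩm : MeasurableSet Ω := hΩopen.measurableSet
  have hp0 : 0 < p := by
    have hns : (0 : ℝ) ≤ (n : ℝ) / s := div_nonneg (Nat.cast_nonneg n) hs.le
    linarith
  set Bn : ℝ := (volume (ball (0 : EuclideanSpace ℝ (Fin n)) 1)).toReal with hBn
  have hBnpos : 0 < Bn := by
    refine ENNReal.toReal_pos (measure_ball_pos volume _ one_pos).ne' measure_ball_lt_top.ne
  have hNn : (0 : ℝ) < (N : ℝ) ^ n * Bn := by positivity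
  refine ⟨C * ((N ^ n * Bn) ^ (1 / p)), by positivity, ?_⟩
  intro u g hDB hLp
  obtain ⟨hg0, hgmeas, hDB3⟩ := hDB
  set μ : Measure (EuclideanSpace ℝ (Fin n)) := volume.restrict Ω with hμ
  haveI : IsLocallyFiniteMeasure μ := Measure.isLocallyFiniteMeasure_of_le Measure.restrict_le_self
  set f : EuclideanSpace ℝ (Fin n) → ℝ := fun z => g z ^ p with hf
  have hf0 : ∀ z, 0 ≤ f z := fun z => Real.rpow_nonneg (hg0 z) p
  have habs : ∀ z, |f z| = f z := fun z => abs_of_nonneg (hf0 z)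
  have hf_int : Integrable f μ := by
    have h := hLp.integrable_norm_rpow
      (by simp [ENNReal.ofReal_eq_zero, not_le, hp0]) ENNReal.ofReal_ne_top
    rw [ENNReal.toReal_ofReal hp0.le] at h
    exact h.congr (Filter.Eventually.of_forall fun z => by
      show ‖g z‖ ^ p = f z
      rw [Real.norm_eq_abs, abs_of_nonneg (hg0 z)])
  have hfiΩ : IntegrableOn f Ω volume := hf_int
  -- Lebesgue differentiation
  set T : EuclideanSpace ℝ (Fin n) → Prop := fun x =>
    Filter.Tendsto (fun r => ⨍ y in closedBall x r, f y ∂μ)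
      (nhdsWithin 0 (Set.Ioi 0)) (nhds (f x)) with hT
  have hae : ∀ᵐ x ∂μ, T x := by
    filter_upwards [(Besicovitch.vitaliFamily μ).ae_tendsto_average
      hf_int.locallyIntegrable] with x hx
    exact hx.comp (Besicovitch.tendsto_filterAt μ x)
  obtain ⟨E₁, hE₁, hEineq⟩ := hyp u g ⟨hg0, hgmeas, hDB3⟩ hLp
  have hE₂ : volume ({x | ¬ T x} ∩ Ω) = 0 := by
    have h0 : μ {x | ¬ T x} = 0 := MeasureTheory.ae_iff.1 hae
    rwa [hμ, Measure.restrict_apply' hΩm] at h0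
  refine ⟨E₁ ∪ ({x | ¬ T x} ∩ Ω), measure_union_null hE₁ hE₂, ?_⟩
  intro x hxmem y hymem hdist
  have hx : x ∈ Ω \ E₁ := ⟨hxmem.1, fun h => hxmem.2 (Or.inl h)⟩
  have hy : y ∈ Ω \ E₁ := ⟨hymem.1, fun h => hymem.2 (Or.inl h)⟩
  have hTx : T x := by
    by_contra h
    exact hxmem.2 (Or.inr ⟨h, hxmem.1⟩)
  have hTy : T y := by
    by_contra h
    exact hymem.2 (Or.inr ⟨h, hymem.1⟩)
  set d : ℝ := dist x y with hd
  rcases eq_or_lt_of_le (dist_nonneg : (0:ℝ) ≤ dist x y) with hd0 | hd0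
  · -- degenerate case `x = y`
    have hdz : d = 0 := hd.trans hd0.symm
    rw [hdz, Real.zero_rpow hs.ne', mul_zero, zero_mul]
    have hxy : x = y := dist_eq_zero.1 (hd.symm.trans hdz)
    simp [hxy]
  -- main case
  have hdpos : 0 < d := hd0
  have key : ∀ w : EuclideanSpace ℝ (Fin n), w ∈ Ω → T w →
      (0 ≤ restrictedMaximal Ω (2 * N * d) f w) ∧
      (∫ z in ball w (N * d) ∩ Ω, f z) ≤
        restrictedMaximal Ω (2 * N * d) f w * (volume (ball w (N * d) ∩ Ω)).toReal := by
    intro w hw hTw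
    have hbdd0 := bddAbove_avgSet Ω hΩopen c θ hc hθ hreg f hf0 hfiΩ w hw hTw
    have hsubset : {a : ℝ | ∃ r : ℝ, 0 < r ∧ r < 2 * N * d ∧
        a = (∫ z in ball w r ∩ Ω, |f z|) / (volume (ball w r ∩ Ω)).toReal} ⊆
        {a : ℝ | ∃ r : ℝ, 0 < r ∧
        a = (∫ z in ball w r ∩ Ω, f z) / (volume (ball w r ∩ Ω)).toReal} := by
      rintro a ⟨r, hr0, _, ha⟩
      refine ⟨r, hr0, ?_⟩
      rw [ha]
      congr 1
      exact integral_congr_ae (Filter.Eventually.of_forall fun z => habs z)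
    have hbdd := hbdd0.mono hsubset
    have hNd : 0 < N * d := by positivity
    have hmem : (∫ z in ball w (N * d) ∩ Ω, f z) / (volume (ball w (N * d) ∩ Ω)).toReal ∈
        {a : ℝ | ∃ r : ℝ, 0 < r ∧ r < 2 * N * d ∧
        a = (∫ z in ball w r ∩ Ω, |f z|) / (volume (ball w r ∩ Ω)).toReal} := by
      refine ⟨N * d, hNd, by nlinarith, ?_⟩
      congr 1
      exact (integral_congr_ae (Filter.Eventually.of_forall fun z => habs z)).symm
    have hle : (∫ z in ball w (N * d) ∩ Ω, f z) / (volume (ball w (N * d) ∩ Ω)).toReal ≤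
        restrictedMaximal Ω (2 * N * d) f w := le_csSup hbdd hmem
    have hM0 : 0 ≤ restrictedMaximal Ω (2 * N * d) f w := by
      refine le_trans ?_ hle
      exact div_nonneg (setIntegral_nonneg (measurableSet_ball.inter hΩm) fun z _ => hf0 z)
        ENNReal.toReal_nonneg
    refine ⟨hM0, ?_⟩
    rcases eq_or_lt_of_le (ENNReal.toReal_nonneg :
        (0:ℝ) ≤ (volume (ball w (N * d) ∩ Ω)).toReal) with hV0 | hV0
    · have hVmeas : volume (ball w (N * d) ∩ Ω) = 0 := by
        have hfin : volume (ball w (N * d) ∩ Ω) ≠ ⊤ :=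
          ((measure_mono Set.inter_subset_left).trans_lt measure_ball_lt_top).ne
        rwa [eq_comm, ENNReal.toReal_eq_zero_iff, or_iff_left hfin] at hV0
      have hzero : (∫ z in ball w (N * d) ∩ Ω, f z) = 0 := by
        rw [Measure.restrict_eq_zero.2 hVmeas, integral_zero_measure]
      rw [hzero, ← hV0, mul_zero]
    · rw [div_le_iff₀ hV0] at hle
      exact hle
  obtain ⟨hMx0, hMx⟩ := key x hxmem.1 hTx
  obtain ⟨hMy0, hMy⟩ := key y hymem.1 hTy
  set Mx : ℝ := restrictedMaximal Ω (2 * N * d) f x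
  set My : ℝ := restrictedMaximal Ω (2 * N * d) f y
  have hVle : (volume (ball x (N * d) ∩ Ω)).toReal ≤ (N * d) ^ n * Bn := by
    refine le_trans (ENNReal.toReal_mono measure_closedBall_lt_top.ne
      (measure_mono (Set.inter_subset_left.trans ball_subset_closedBall))) ?_
    rw [Measure.addHaar_closedBall volume x (by positivity : (0:ℝ) ≤ N * d), ENNReal.toReal_mul,
      ENNReal.toReal_ofReal (by positivity)]
    simp [finrank_euclideanSpace_fin, hBn]
  have hIx0 : 0 ≤ ∫ z in ball x (N * d) ∩ Ω, f z :=
    setIntegral_nonneg (measurableSet_ball.inter hΩm) fun z _ => hf0 z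
  have hIxle : (∫ z in ball x (N * d) ∩ Ω, f z) ≤ Mx * ((N * d) ^ n * Bn) := by
    refine le_trans hMx ?_
    exact mul_le_mul_of_nonneg_left hVle hMx0
  have h1 := hEineq x hx y hy (by rw [← hd]; linarith)
  rw [← hd] at h1
  calc |u x - u y| ≤ C * d ^ (s - n / p) * (∫ z in ball x (N * d) ∩ Ω, g z ^ p) ^ (1 / p) := h1
    _ ≤ C * d ^ (s - n / p) * (Mx * ((N * d) ^ n * Bn)) ^ (1 / p) := by
        refine mul_le_mul_of_nonneg_left ?_ (by positivity)
        exact Real.rpow_le_rpow hIx0 hIxle (by positivity)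
    _ = (C * ((N ^ n * Bn) ^ (1 / p))) * d ^ s * Mx ^ (1 / p) := by
        rw [Real.mul_rpow hMx0 (by positivity)]
        have h2 : ((N * d) ^ n * Bn : ℝ) = (N ^ n * Bn) * d ^ n := by ring
        rw [h2, Real.mul_rpow (by positivity) (by positivity)]
        have h3 : ((d : ℝ) ^ n) ^ (1 / p) = d ^ ((n : ℝ) / p) := by
          rw [← Real.rpow_natCast d n, ← Real.rpow_mul hdpos.le, mul_one_div]
        have h4 : d ^ (s - (n : ℝ) / p) * d ^ ((n : ℝ) / p) = d ^ s := by
          rw [← Real.rpow_add hdpos]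
          ring_nf
        rw [h3]
        calc C * d ^ (s - (n : ℝ) / p) * (Mx ^ (1 / p) * ((N ^ n * Bn) ^ (1 / p) * d ^ ((n:ℝ) / p)))
            = (C * ((N ^ n * Bn) ^ (1 / p))) * (d ^ (s - (n:ℝ) / p) * d ^ ((n:ℝ) / p)) * Mx ^ (1 / p) := by
              ring
          _ = (C * ((N ^ n * Bn) ^ (1 / p))) * d ^ s * Mx ^ (1 / p) := by rw [h4]
    _ ≤ (C * ((N ^ n * Bn) ^ (1 / p))) * d ^ s * (Mx + My) ^ (1 / p) := by
        refine mul_le_mul_of_nonneg_left ?_ (by positivity)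
        exact Real.rpow_le_rpow hMx0 (le_add_of_nonneg_right hMy0) (by positivity)
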